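/- arXiv:2505.18119 — 3 statements merged into one kernel-verified Lean document; each statement's English description precedes it below -/
import Mathlib

section
/- Let H be a self-adjoint operator on a finite-dimensional complex inner product space, and let A, B be unitary operators with A H = H A, B H = H B, and A B = − B A. Then every eigenspace of H has even dimension; in particular H has no nondegenerate eigenvalue. -/
/-- If a self-adjoint operator `H` on a finite-dimensional complex inner product space commutes
with two unitaries `A`, `B` satisfying `A * B = - B * A`, then every eigenspace of `H` has even
dimension; in particular no eigenvalue of `H` is nondegenerate. -/
theorem stmt_1 (E : Type*) [NormedAddCommGroup E] [InnerProductSpace ℂ E]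
    [FiniteDimensional ℂ E]
    (H A B : E →ₗ[ℂ] E)
    (hH : LinearMap.IsSymmetric H)
    (hAu : LinearMap.adjoint A * A = 1) (hAu' : A * LinearMap.adjoint A = 1)
    (hBu : LinearMap.adjoint B * B = 1) (hBu' : B * LinearMap.adjoint B = 1)
    (hAH : A * H = H * A) (hBH : B * H = H * B)
    (hAB : A * B = - (B * A)) :
    ∀ μ : ℂ, Even (Module.finrank ℂ (Module.End.eigenspace H μ)) ∧
      Module.finrank ℂ (Module.End.eigenspace H μ) ≠ 1 := by
  intro μ
  set V := Module.End.eigenspace H μ with hV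
  -- A and B map V into itself
  have hAinj : Function.Injective A := by
    intro x y hxy
    have := congrArg (LinearMap.adjoint A) hxy
    simpa [← Module.End.mul_apply, hAu] using this
  have hBinj : Function.Injective B := by
    intro x y hxy
    have := congrArg (LinearMap.adjoint B) hxy
    simpa [← Module.End.mul_apply, hBu] using this
  have hAmap : ∀ x ∈ V, A x ∈ V := by
    intro x hx
    rw [hV, Module.End.mem_eigenspace_iff] at hx ⊢
    have : (H * A) x = (A * H) x := by rw [hAH]
    simp only [Module.End.mul_apply] at this
    rw [this, hx, map_smul]
  have hBmap : ∀ x ∈ V, B x ∈ V := by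
    intro x hx
    rw [hV, Module.End.mem_eigenspace_iff] at hx ⊢
    have : (H * B) x = (B * H) x := by rw [hBH]
    simp only [Module.End.mul_apply] at this
    rw [this, hx, map_smul]
  set A' : V →ₗ[ℂ] V := A.restrict hAmap with hA'
  set B' : V →ₗ[ℂ] V := B.restrict hBmap with hB'
  have hA'inj : Function.Injective A' := by
    intro x y hxy
    have : A (x : E) = A (y : E) := congrArg Subtype.val hxy
    exact Subtype.ext (hAinj this)
  have hB'inj : Function.Injective B' := by
    intro x y hxy
    have : B (x : E) = B (y : E) := congrArg Subtype.val hxy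
    exact Subtype.ext (hBinj this)
  have hdetA : LinearMap.det A' ≠ 0 := by
    intro h
    obtain ⟨x, hx, hx0⟩ := Submodule.exists_mem_ne_zero_of_ne_bot
      (bot_lt_iff_ne_bot.mp (LinearMap.bot_lt_ker_of_det_eq_zero h))
    exact hx0 (hA'inj (by simpa using hx))
  have hdetB : LinearMap.det B' ≠ 0 := by
    intro h
    obtain ⟨x, hx, hx0⟩ := Submodule.exists_mem_ne_zero_of_ne_bot
      (bot_lt_iff_ne_bot.mp (LinearMap.bot_lt_ker_of_det_eq_zero h))
    exact hx0 (hB'inj (by simpa using hx))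
  -- anticommutation descends
  have hAB' : A' * B' = -(B' * A') := by
    ext x
    have := congrFun (congrArg DFunLike.coe hAB) (x : E)
    simpa [A', B', LinearMap.restrict_apply, Module.End.mul_apply] using this
  -- determinant argument
  set n := Module.finrank ℂ V with hn
  have hdet : LinearMap.det (A' * B') = LinearMap.det (-(B' * A')) := by rw [hAB']
  have h1 : LinearMap.det (A' * B') = LinearMap.det A' * LinearMap.det B' := by
    simp [Module.End.mul_eq_comp, LinearMap.det_comp]
  have h2 : LinearMap.det (-(B' * A')) = (-1 : ℂ) ^ n * (LinearMap.det B' * LinearMap.det A') := by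
    rw [(neg_one_smul ℂ (B' * A')).symm, LinearMap.det_smul, Module.End.mul_eq_comp, LinearMap.det_comp]
  have hpow : (-1 : ℂ) ^ n = 1 := by
    rw [h1, h2] at hdet
    apply mul_right_cancel₀ (mul_ne_zero hdetB hdetA)
    rw [one_mul, ← hdet, mul_comm]
  have heven : Even n := by
    rwa [neg_one_pow_eq_one_iff_even (by norm_num : (-1 : ℂ) ≠ 1)] at hpow
  exact ⟨heven, by intro h; rw [h] at heven; exact (Nat.not_even_one) heven⟩
end

section
/- Let L_x, L_y ≥ 1. The number of functions f : (ℤ/L_x) × (ℤ/L_y) → ℤ/2 satisfying f(i,j) + f(i+1,j) + f(i,j+1) + f(i+1,j+1) = 0 for all (i,j) is exactly 2^{L_x + L_y − 1}. Equivalently, every such f is of the form f(i,j) = g(i) + h(j) for some g : ℤ/L_x → ℤ/2 and h : ℤ/L_y → ℤ/2. -/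
private lemma z2_key : ∀ a b c d : ZMod 2, (a + c) + (b + c) + (a + d) + (b + d) = 0 := by decide

private lemma z2_add_self (a : ZMod 2) : a + a = 0 := by revert a; decide

private lemma plaq_decomp {Lx Ly : ℕ} (hx : 1 ≤ Lx) (hy : 1 ≤ Ly)
    (f : ZMod Lx × ZMod Ly → ZMod 2)
    (hf : ∀ (i : ZMod Lx) (j : ZMod Ly),
      f (i, j) + f (i + 1, j) + f (i, j + 1) + f (i + 1, j + 1) = 0) :
    ∀ (i : ZMod Lx) (j : ZMod Ly), f (i, j) = f (i, 0) + f (0, j) + f (0, 0) := by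
  haveI : NeZero Lx := ⟨by omega⟩
  haveI : NeZero Ly := ⟨by omega⟩
  have key : ∀ a b c d : ZMod 2, a + b + c + d = 0 → d = a + b + c := by decide
  -- column differences independent of j
  have hA : ∀ (i : ZMod Lx) (j : ZMod Ly),
      f (i + 1, j) + f (i, j) = f (i + 1, 0) + f (i, 0) := by
    intro i j
    obtain ⟨b, rfl⟩ := ZMod.natCast_zmod_surjective (n := Ly) j
    induction b with
    | zero => simp
    | succ b ih =>
      have h1 := hf i (b : ZMod Ly)
      have step : ∀ a b c d : ZMod 2, a + b + c + d = 0 → d + c = b + a := by decide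
      have := step _ _ _ _ h1
      push_cast
      rw [this]
      have comm : ∀ a b : ZMod 2, a + b = b + a := fun a b => add_comm a b
      rw [comm] at ih ⊢
      exact ih
  have hB : ∀ (i : ZMod Lx) (j : ZMod Ly),
      f (i, j) + f (i, 0) = f (0, j) + f (0, 0) := by
    intro i j
    obtain ⟨a, rfl⟩ := ZMod.natCast_zmod_surjective (n := Lx) i
    induction a with
    | zero => simp
    | succ a ih =>
      have h1 := hA (a : ZMod Lx) j
      have h2 := hA (a : ZMod Lx) 0
      push_cast
      -- f(a+1,j) + f(a+1,0) = (f(a+1,j)+f(a,j)) + (f(a,j)+f(a,0)) + (f(a,0)+f(a+1,0))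
      have calc1 : f ((a : ZMod Lx) + 1, j) + f ((a : ZMod Lx) + 1, 0)
          = (f ((a : ZMod Lx) + 1, j) + f ((a : ZMod Lx), j))
            + (f ((a : ZMod Lx), j) + f ((a : ZMod Lx), 0))
            + (f ((a : ZMod Lx) + 1, 0) + f ((a : ZMod Lx), 0)) := by
        generalize f ((a : ZMod Lx) + 1, j) = w
        generalize f ((a : ZMod Lx), j) = x
        generalize f ((a : ZMod Lx), 0) = y
        generalize f ((a : ZMod Lx) + 1, 0) = z
        revert w x y z; decide
      rw [calc1, h1, ih]
      generalize f ((a : ZMod Lx) + 1, 0) = w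
      generalize f ((a : ZMod Lx), 0) = x
      generalize f ((0 : ZMod Lx), j) = y
      generalize f ((0 : ZMod Lx), (0 : ZMod Ly)) = z
      revert w x y z; decide
  intro i j
  have := hB i j
  have fin : ∀ x y u v : ZMod 2, x + y = u + v → x = y + u + v := by decide
  exact fin _ _ _ _ this

/-- Counting ground states of the plaquette Ising model on an `L_x × L_y` torus:
the functions `f : ℤ/L_x × ℤ/L_y → ℤ/2` whose sum over every elementary plaquette
vanishes number exactly `2^{L_x + L_y - 1}`, and they are precisely the functions of
the form `f(i,j) = g(i) + h(j)`. -/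
theorem stmt_7 (Lx Ly : ℕ) (hx : 1 ≤ Lx) (hy : 1 ≤ Ly) :
    Nat.card {f : ZMod Lx × ZMod Ly → ZMod 2 //
        ∀ (i : ZMod Lx) (j : ZMod Ly),
          f (i, j) + f (i + 1, j) + f (i, j + 1) + f (i + 1, j + 1) = 0} =
      2 ^ (Lx + Ly - 1) ∧
    ∀ f : ZMod Lx × ZMod Ly → ZMod 2,
      (∀ (i : ZMod Lx) (j : ZMod Ly),
          f (i, j) + f (i + 1, j) + f (i, j + 1) + f (i + 1, j + 1) = 0) ↔
        ∃ (g : ZMod Lx → ZMod 2) (h : ZMod Ly → ZMod 2),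
          ∀ (i : ZMod Lx) (j : ZMod Ly), f (i, j) = g i + h j := by
  haveI : NeZero Lx := ⟨by omega⟩
  haveI : NeZero Ly := ⟨by omega⟩
  have back : ∀ (g : ZMod Lx → ZMod 2) (h : ZMod Ly → ZMod 2)
      (f : ZMod Lx × ZMod Ly → ZMod 2),
      (∀ (i : ZMod Lx) (j : ZMod Ly), f (i, j) = g i + h j) →
      ∀ (i : ZMod Lx) (j : ZMod Ly),
        f (i, j) + f (i + 1, j) + f (i, j + 1) + f (i + 1, j + 1) = 0 := by
    intro g h f hrep i j
    rw [hrep, hrep, hrep, hrep]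
    exact z2_key (g i) (g (i+1)) (h j) (h (j+1))
  constructor
  · -- counting
    let E : {f : ZMod Lx × ZMod Ly → ZMod 2 //
        ∀ (i : ZMod Lx) (j : ZMod Ly),
          f (i, j) + f (i + 1, j) + f (i, j + 1) + f (i + 1, j + 1) = 0} ≃
        (ZMod Lx → ZMod 2) × {h : ZMod Ly → ZMod 2 // h 0 = 0} :=
      { toFun := fun f => (fun i => f.1 (i, 0),
          ⟨fun j => f.1 (0, j) + f.1 (0, 0), z2_add_self _⟩)
        invFun := fun p => ⟨fun q => p.1 q.1 + p.2.1 q.2,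
          back p.1 p.2.1 (fun q => p.1 q.1 + p.2.1 q.2) (fun _ _ => rfl)⟩
        left_inv := by
          rintro ⟨f, hf⟩
          ext ⟨i, j⟩
          have := plaq_decomp hx hy f hf i j
          simp only [this]
          generalize f (i, 0) = a
          generalize f ((0 : ZMod Lx), j) = b
          generalize f ((0 : ZMod Lx), (0 : ZMod Ly)) = c
          revert a b c; decide
        right_inv := by
          rintro ⟨g, h, h0⟩
          refine Prod.ext ?_ (Subtype.ext ?_)
          · funext i; simp [h0]
          · funext j
            simp only [h0]
            generalize g 0 = a
            generalize h j = b
            revert a b; decide }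
    rw [Nat.card_congr E]
    have E2 : {h : ZMod Ly → ZMod 2 // h 0 = 0} ≃ ({j : ZMod Ly // j ≠ 0} → ZMod 2) :=
      { toFun := fun h j => h.1 j.1
        invFun := fun k => ⟨fun j => if hj : j = 0 then 0 else k ⟨j, hj⟩, by simp⟩
        left_inv := by
          rintro ⟨h, h0⟩
          apply Subtype.ext
          funext j
          by_cases hj : j = 0 <;> simp [hj, h0]
        right_inv := by
          intro k
          funext j
          simp [j.2] }
    rw [Nat.card_prod, Nat.card_congr E2]
    rw [Nat.card_eq_fintype_card, Nat.card_eq_fintype_card]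
    rw [Fintype.card_fun, Fintype.card_fun]
    have hcard : Fintype.card {j : ZMod Ly // j ≠ 0} = Ly - 1 := by
      simp [Fintype.card_subtype_compl, Fintype.card_subtype_eq, ZMod.card]
    rw [hcard]; simp only [ZMod.card]
    rw [← pow_add]
    congr 1
    omega
  · intro f
    constructor
    · intro hf
      exact ⟨fun i => f (i, 0), fun j => f (0, j) + f (0, 0), by
        intro i j
        rw [plaq_decomp hx hy f hf i j]
        ring⟩
    · rintro ⟨g, h, hrep⟩
      exact back g h f hrep
end

section
/- Let G = (ℤ/2)³ and ω(g,h,k) = (−1)^{g₁ h₂ k₃} as above. Then ω is not a coboundary: there is no function β : G × G → U(1) with ω(g₁,g₂,g₃) = β(g₂,g₃) β(g₁g₂,g₃)⁻¹ β(g₁,g₂g₃) β(g₁,g₂)⁻¹ for all g₁,g₂,g₃ ∈ G. Hence ω represents a nontrivial class in H³((ℤ/2)³, U(1)). -/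
/-!
On an abelian group, the coboundary `δβ` of any 2-cochain has the same product over the three
cyclic orderings of a triple `(a, b, c)` as over the three anticyclic ones: every value of `β`
occurs equally often in the numerators and denominators on both sides. For the type-III cocycle
and the standard basis `e₁, e₂, e₃` of `(ℤ/2)³` the two products are `-1` and `1`, since only
`ω(e₁, e₂, e₃)` is nontrivial.
-/

/-- The type-III cocycle `ω(g,h,k) = (-1)^{g₁ h₂ k₃}` on `(ℤ/2)³`, valued in `{±1} ⊆ ℂ`. -/
def omega3 (g h k : ZMod 2 × ZMod 2 × ZMod 2) : ℂ :=
  (-1 : ℂ) ^ (g.1.val * h.2.1.val * k.2.2.val)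

section Coboundary

variable {G M : Type*} [AddCommMagma G] [CommGroupWithZero M]

def coboundary2 (β : G → G → M) (a b c : G) : M :=
  β b c * (β (a + b) c)⁻¹ * β a (b + c) * (β a b)⁻¹

theorem coboundary2_cyclic_eq_anticyclic {β : G → G → M} (hβ : ∀ g h, β g h ≠ 0) (a b c : G) :
    coboundary2 β a b c * coboundary2 β b c a * coboundary2 β c a b =
      coboundary2 β b a c * coboundary2 β a c b * coboundary2 β c b a := by
  simp only [coboundary2, add_comm b a, add_comm c a, add_comm c b]
  field_simp [hβ]

end Coboundary

theorem omega3_cyclic_ne_anticyclic :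
    omega3 (1, 0, 0) (0, 1, 0) (0, 0, 1) * omega3 (0, 1, 0) (0, 0, 1) (1, 0, 0) *
        omega3 (0, 0, 1) (1, 0, 0) (0, 1, 0) ≠
      omega3 (0, 1, 0) (1, 0, 0) (0, 0, 1) * omega3 (1, 0, 0) (0, 0, 1) (0, 1, 0) *
        omega3 (0, 0, 1) (0, 1, 0) (1, 0, 0) := by
  norm_num [omega3, ZMod.val_one]

/-- The cocycle `ω(g,h,k) = (-1)^{g₁ h₂ k₃}` on `(ℤ/2)³` is not a coboundary of any
`U(1)`-valued 2-cochain: it represents a nontrivial class in `H³((ℤ/2)³, U(1))`. -/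
theorem stmt_10 :
    ¬ ∃ β : (ZMod 2 × ZMod 2 × ZMod 2) → (ZMod 2 × ZMod 2 × ZMod 2) → ℂ,
      (∀ g h, ‖β g h‖ = 1) ∧
      ∀ g1 g2 g3,
        omega3 g1 g2 g3 =
          β g2 g3 * (β (g1 + g2) g3)⁻¹ * β g1 (g2 + g3) * (β g1 g2)⁻¹ := by
  rintro ⟨β, hβ_norm, hω⟩
  have hβ : ∀ g h, β g h ≠ 0 := fun g h => norm_ne_zero_iff.mp (by simp [hβ_norm])
  have hω_eq : omega3 = coboundary2 β := funext₃ hω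
  apply omega3_cyclic_ne_anticyclic
  rw [hω_eq]
  exact coboundary2_cyclic_eq_anticyclic hβ _ _ _
end
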